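/- The Dirichlet monoidal structure on polynomial functors is closed: for polynomial functors p, q, r there is a bijection, natural in r, between natural transformations from the associated functor of r ⊗ p to the associated functor of q, and natural transformations from the associated functor of r to the functor [p,q] defined by [p,q](X) = Π (i : p.A), Σ (j : q.A), (q.B j → (p.B i × X)) (i.e. [p,q] is the product over i : p.A of the composites q ∘ (p.B i · y), which is again a polynomial functor). -/

import Mathlib

open CategoryTheory

universe u

/-- The associated functor `Type u ⥤ Type u` of a polynomial functor. -/
def PFunctor.toFunctor (P : PFunctor.{u, u}) : Type u ⥤ Type u where
  obj X := P.Obj X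
  map f := TypeCat.ofHom (fun x => P.map f x)
  map_id := by intro X; ext x; exact P.id_map x
  map_comp := by intro X Y Z f g; ext x; exact (P.map_map f g x).symm

/-- The Dirichlet product of polynomial functors: positions multiply, directions multiply. -/
def tensorPoly (p q : PFunctor.{u, u}) : PFunctor.{u, u} :=
  ⟨p.A × q.A, fun ij => p.B ij.1 × q.B ij.2⟩

/-- The internal hom for the Dirichlet monoidal structure:
`[p,q] (X) = Π (i : p.A), Σ (j : q.A), (q.B j → (p.B i × X))`. -/
def dirHomFun (p q : PFunctor.{u, u}) : Type u ⥤ Type u where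
  obj X := ∀ i : p.A, Σ j : q.A, (q.B j → (p.B i × X))
  map f := TypeCat.ofHom (fun g i => ⟨(g i).1, fun d => Prod.map id f ((g i).2 d)⟩)
  map_id := by intro X; rfl
  map_comp := by intro X Y Z f h; rfl

/-- The natural transformation of associated functors induced by a morphism of polynomials
given by on-positions and on-directions data. -/
def lensNat {p q : PFunctor.{u, u}} (f : ∀ i : p.A, Σ j : q.A, (q.B j → p.B i)) :
    p.toFunctor ⟶ q.toFunctor where
  app X := TypeCat.ofHom (fun x => ⟨(f x.1).1, fun d => x.2 ((f x.1).2 d)⟩)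
  naturality := by intros; rfl

/-- The induced morphism `r' ⊗ p ⟶ r ⊗ p` on associated functors of Dirichlet products. -/
def lensTensorWhisker (p : PFunctor.{u, u}) {r r' : PFunctor.{u, u}}
    (f : ∀ i : r'.A, Σ j : r.A, (r.B j → r'.B i)) :
    (tensorPoly r' p).toFunctor ⟶ (tensorPoly r p).toFunctor where
  app X := TypeCat.ofHom (fun x => ⟨((f x.1.1).1, x.1.2), fun d => x.2 ((f x.1.1).2 d.1, d.2)⟩)
  naturality := by intros; rfl

/-!
A natural transformation out of a polynomial functor `P = Σ a, y^(P.B a)` is, by the Yoneda lemma,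
a family of elements of `F (P.B a)`. Hence `Nat(r ⊗ p, q)` is `Π (a, i), q (r.B a × p.B i)` and
`Nat(r, [p,q])` is `Π a, Π i, Σ j, (q.B j → p.B i × r.B a)`; these agree up to currying and swapping
the two factors. Precomposing with a lens `f` acts on both families by reindexing along its position
map and pushing forward along its direction maps, which gives naturality in `r`.
-/

namespace PFunctor

variable (P : PFunctor.{u, u}) (F : Type u ⥤ Type u)

def natTransEquiv : (P.toFunctor ⟶ F) ≃ ∀ a : P.A, F.obj (P.B a) where
  toFun α a := α.app (P.B a) ⟨a, id⟩
  invFun s :=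
    { app X := TypeCat.ofHom fun x => F.map (TypeCat.ofHom x.2) (s x.1)
      naturality X Y g := by
        ext ⟨a, h⟩
        exact ConcreteCategory.congr_hom (F.map_comp (TypeCat.ofHom h) g) (s a) }
  left_inv α := by
    ext X ⟨a, h⟩
    exact (ConcreteCategory.congr_hom (α.naturality (TypeCat.ofHom h)) ⟨a, id⟩).symm
  right_inv s := by
    funext a
    exact ConcreteCategory.congr_hom (F.map_id (P.B a)) (s a)

variable {P F}

theorem natTransEquiv_lensNat_comp {Q : PFunctor.{u, u}}
    (f : ∀ i : Q.A, Σ j : P.A, (P.B j → Q.B i)) (β : P.toFunctor ⟶ F) (a : Q.A) :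
    natTransEquiv Q F (lensNat f ≫ β) a =
      F.map (TypeCat.ofHom (f a).2) (natTransEquiv P F β (f a).1) :=
  ConcreteCategory.congr_hom (β.naturality (TypeCat.ofHom (f a).2)) ⟨(f a).1, id⟩

end PFunctor

open PFunctor

theorem lensTensorWhisker_eq_lensNat (p : PFunctor.{u, u}) {r r' : PFunctor.{u, u}}
    (f : ∀ i : r'.A, Σ j : r.A, (r.B j → r'.B i)) :
    lensTensorWhisker p f =
      lensNat (p := tensorPoly r' p) (q := tensorPoly r p)
        fun ai => ⟨((f ai.1).1, ai.2), Prod.map (f ai.1).2 id⟩ :=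
  rfl

def tensorHomEquiv (p q r : PFunctor.{u, u}) :
    (∀ ai : (tensorPoly r p).A, q.toFunctor.obj ((tensorPoly r p).B ai)) ≃
      ∀ a : r.A, (dirHomFun p q).obj (r.B a) where
  toFun s a i := ⟨(s (a, i)).1, fun d => ((s (a, i)).2 d).swap⟩
  invFun t ai := ⟨(t ai.1 ai.2).1, fun d => ((t ai.1 ai.2).2 d).swap⟩
  left_inv _ := rfl
  right_inv _ := rfl

def tensorNatTransEquiv (p q r : PFunctor.{u, u}) :
    ((tensorPoly r p).toFunctor ⟶ q.toFunctor) ≃ (r.toFunctor ⟶ dirHomFun p q) :=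
  (natTransEquiv _ _).trans ((tensorHomEquiv p q r).trans (natTransEquiv r _).symm)

/-- the Dirichlet monoidal structure is closed:
`Nat(r ⊗ p, q) ≅ Nat(r, [p,q])`, naturally in `r`. -/
theorem stmt_5 (p q : PFunctor.{u, u}) :
    ∃ e : ∀ r : PFunctor.{u, u},
        ((tensorPoly r p).toFunctor ⟶ q.toFunctor) ≃ (r.toFunctor ⟶ dirHomFun p q),
      ∀ (r r' : PFunctor.{u, u}) (f : ∀ i : r'.A, Σ j : r.A, (r.B j → r'.B i))
        (α : (tensorPoly r p).toFunctor ⟶ q.toFunctor),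
        e r' (lensTensorWhisker p f ≫ α) = lensNat f ≫ e r α := by
  refine ⟨tensorNatTransEquiv p q, fun r r' f α => ?_⟩
  apply (natTransEquiv r' _).injective
  funext a
  rw [natTransEquiv_lensNat_comp]
  simp only [tensorNatTransEquiv, Equiv.trans_apply, Equiv.apply_symm_apply]
  funext i
  rw [lensTensorWhisker_eq_lensNat]
  exact congrArg (fun s : q.Obj (r'.B a × p.B i) =>
      (⟨s.1, fun d => (s.2 d).swap⟩ : Σ j : q.A, (q.B j → p.B i × r'.B a)))
    (natTransEquiv_lensNat_comp (Q := tensorPoly r' p) _ α (a, i))
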